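/- arXiv:1605.09693 — 2 statements merged into one kernel-verified Lean document; each statement's English description precedes it below -/
import Mathlib

section
/- Let Σ^{n−1} ⊂ ℝⁿ be a two-sided minimal hypersurface, and let ω be a harmonic 1-form on Σ such that for all pairs 1 ≤ i < j ≤ n, the function f_{ω,ij} = ⟨V̄ᵢ,ν⟩⟨Vⱼ,ω⟩ − ⟨V̄ⱼ,ν⟩⟨Vᵢ,ω⟩ vanishes identically on Σ. Then ω = 0. -/
noncomputable section
open scoped RealInnerProductSpace

/-- Euclidean space `ℝⁿ`. -/
abbrev E (n : ℕ) := EuclideanSpace ℝ (Fin n)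

/-- The `i`-th standard basis vector. -/
def sb {n : ℕ} (i : Fin n) : E n := EuclideanSpace.single i 1

/-- Tangential projection with respect to the unit normal `ν`. -/
def tproj {n : ℕ} (ν : E n → E n) (p X : E n) : E n := X - ⟪X, ν p⟫ • ν p

/-- The shape operator `S(X) = -D_X ν`. -/
def shape {n : ℕ} (ν : E n → E n) (p X : E n) : E n := -(fderiv ℝ ν p X)

/-- Mean curvature quantity: the trace of the Weingarten map `Dν`. -/
def meanH {n : ℕ} (ν : E n → E n) (p : E n) : ℝ :=
  ∑ i, ⟪fderiv ℝ ν p (sb i), sb i⟫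

/-- The squared norm `|A|²` of the second fundamental form. -/
def normA2 {n : ℕ} (ν : E n → E n) (p : E n) : ℝ :=
  ∑ i, ‖fderiv ℝ ν p (sb i)‖ ^ 2

/-- The Laplace-Beltrami operator of the induced metric on the hypersurface
with unit normal `ν`, applied to an ambient function `f`:
`Δ_Σ f = Δ_{ℝⁿ} f - Hess f(ν,ν) - H ∂_ν f`. -/
def surfLap {n : ℕ} (ν : E n → E n) (f : E n → ℝ) (p : E n) : ℝ :=
  (∑ i, iteratedFDeriv ℝ 2 f p ![sb i, sb i]) - iteratedFDeriv ℝ 2 f p ![ν p, ν p]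
    - meanH ν p * fderiv ℝ f p (ν p)

/-- Covariant derivative (induced Levi-Civita connection) of a tangent vector
field `ξ` in the direction `X`: the tangential part of the Euclidean
derivative. -/
def covD {n : ℕ} (ν : E n → E n) (ξ : E n → E n) (p X : E n) : E n :=
  tproj ν p (fderiv ℝ ξ p X)

/-- The inner product `⟨A, ∇ξ⟩` of the second fundamental form with the
covariant derivative tensor of the tangent field `ξ`. -/
def Apair {n : ℕ} (ν : E n → E n) (ξ : E n → E n) (p : E n) : ℝ :=
  ∑ i, ⟪-(fderiv ℝ ν p (sb i)), covD ν ξ p (sb i)⟫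

/-- Intrinsic divergence of a tangent vector field on the hypersurface. -/
def divS {n : ℕ} (ν : E n → E n) (ξ : E n → E n) (p : E n) : ℝ :=
  (∑ i, ⟪fderiv ℝ ξ p (sb i), sb i⟫) - ⟪fderiv ℝ ξ p (ν p), ν p⟫

/-- Intrinsic (tangential) gradient of an ambient function. -/
def gradS {n : ℕ} (ν : E n → E n) (f : E n → ℝ) (p : E n) : E n :=
  tproj ν p (gradient f p)

/-- Intrinsic Hessian of an ambient function `φ` on the hypersurface:
`Hess_Σ φ (X,Y) = Hess_{ℝⁿ} φ (X,Y) + A(X,Y) ∂_ν φ` with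
`A(X,Y) = -⟨D_X ν, Y⟩`. -/
def hessS {n : ℕ} (ν : E n → E n) (φ : E n → ℝ) (p X Y : E n) : ℝ :=
  iteratedFDeriv ℝ 2 φ p ![X, Y] + (-(⟪fderiv ℝ ν p X, Y⟫)) * fderiv ℝ φ p (ν p)

/-- on a two-sided minimal hypersurface in `ℝⁿ` with unit normal
`ν`, if `ω` is a harmonic 1-form (dual to the tangent field `ξ`) such that all
the functions `f_{ω,ij} = ⟨V̄ᵢ,ν⟩⟨Vⱼ,ω⟩ - ⟨V̄ⱼ,ν⟩⟨Vᵢ,ω⟩` vanish identically on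
`Σ`, then `ω = 0` on `Σ`. -/
theorem stmt_7 {n : ℕ} (Sig : Set (E n)) (ν : E n → E n)
    (hν : ContDiff ℝ (⊤ : ℕ∞) ν) (hunit : ∀ p, ‖ν p‖ = 1)
    (hnormal : ∀ p, fderiv ℝ ν p (ν p) = 0)
    (hsymm : ∀ p X Y, ⟪fderiv ℝ ν p X, Y⟫ = ⟪X, fderiv ℝ ν p Y⟫)
    (hmin : ∀ p, meanH ν p = 0)
    (ξ : E n → E n) (hξ : ContDiff ℝ (⊤ : ℕ∞) ξ)
    (htan : ∀ p, ⟪ξ p, ν p⟫ = 0)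
    (hclosed : ∀ p X Y, ⟪X, ν p⟫ = 0 → ⟪Y, ν p⟫ = 0 →
      ⟪covD ν ξ p X, Y⟫ = ⟪covD ν ξ p Y, X⟫)
    (hcoclosed : ∀ p, divS ν ξ p = 0)
    (hvanish : ∀ p ∈ Sig, ∀ i j : Fin n, i < j →
      ⟪sb i, ν p⟫ * ⟪tproj ν p (sb j), ξ p⟫
        - ⟪sb j, ν p⟫ * ⟪tproj ν p (sb i), ξ p⟫ = 0) :
    ∀ p ∈ Sig, ξ p = 0 := by
  intro p hp
  have hortho : ⟪ν p, ξ p⟫ = 0 := by rw [real_inner_comm]; exact htan p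
  have hortho' : ∑ i, ν p i * ξ p i = 0 := by
    simpa [PiLp.inner_apply, mul_comm] using hortho
  have key : ∀ i j : Fin n, ν p i * ξ p j = ν p j * ξ p i := by
    have base : ∀ i j : Fin n, i < j → ν p i * ξ p j = ν p j * ξ p i := by
      intro i j hij
      have h := hvanish p hp i j hij
      simp only [tproj, sb, inner_sub_left, real_inner_smul_left,
        EuclideanSpace.inner_single_left, map_one, one_mul, hortho,
        mul_zero, sub_zero] at h
      linarith
    intro i j
    rcases lt_trichotomy i j with h | h | h
    · exact base i j h
    · rw [h]
    · exact (base j i h).symm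
  have hν1 : ∑ i, ν p i * ν p i = 1 := by
    have : ⟪ν p, ν p⟫ = 1 := by
      rw [real_inner_self_eq_norm_sq, hunit p]; norm_num
    rw [PiLp.inner_apply] at this
    simpa [sq] using this
  ext j
  have : ξ p j = (∑ i, ν p i * ν p i) * ξ p j := by rw [hν1, one_mul]
  rw [this, Finset.sum_mul]
  calc ∑ i, ν p i * ν p i * ξ p j
      = ∑ i, ν p j * (ν p i * ξ p i) := by
        apply Finset.sum_congr rfl; intro i _
        rw [mul_assoc, key i j]; ring
    _ = ν p j * ∑ i, ν p i * ξ p i := by rw [Finset.mul_sum]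
    _ = 0 := by rw [hortho', mul_zero]
end
end

section
/- Let Σ³ ⊂ ℝ⁴ be a minimal hypersurface and U ⊂ Σ an open set on which the principal curvatures are λ, λ, −2λ with λ nowhere zero on U, with orthonormal principal frame e₁, e₂, e₃ (where e₃ has principal curvature −2λ). Then the bracket [e₁, e₂] has no e₃ component, the derivative of λ along e₁ and e₂ vanishes (e₁(λ) = e₂(λ) = 0), and hence the distribution spanned by {e₁, e₂} is integrable with λ constant along its integral leaves. -/
noncomputable section
open scoped RealInnerProductSpace

/-- Euclidean space `ℝ⁴`. -/
abbrev E4 := EuclideanSpace ℝ (Fin 4)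

/-- The Lie bracket `[X, Y] = D_X Y - D_Y X` of vector fields in `ℝ⁴`. -/
def brkt (X Y : E4 → E4) (p : E4) : E4 := fderiv ℝ Y p (X p) - fderiv ℝ X p (Y p)

/-- let `Σ³ ⊂ ℝ⁴` be a minimal hypersurface and `U` an open set
on which the principal curvatures are `λ, λ, -2λ` with `λ` nowhere zero, with
orthonormal principal frame `e₁, e₂, e₃` (unit normal `N`). Then `[e₁, e₂]`
has no `e₃` component, `e₁(λ) = e₂(λ) = 0`, and the distribution spanned by
`{e₁, e₂}` is integrable ( `[e₁,e₂] ∈ span{e₁,e₂}` ) with `λ` constant along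
its leaves. -/
theorem stmt_11 (U : Set E4) (hU : IsOpen U)
    (N e₁ e₂ e₃ : E4 → E4) (lam : E4 → ℝ)
    (hN : ContDiffOn ℝ (⊤ : ℕ∞) N U) (he₁ : ContDiffOn ℝ (⊤ : ℕ∞) e₁ U)
    (he₂ : ContDiffOn ℝ (⊤ : ℕ∞) e₂ U) (he₃ : ContDiffOn ℝ (⊤ : ℕ∞) e₃ U)
    (hlam : ContDiffOn ℝ (⊤ : ℕ∞) lam U)
    (horth : ∀ p ∈ U, Orthonormal ℝ ![N p, e₁ p, e₂ p, e₃ p])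
    (hprin₁ : ∀ p ∈ U, fderiv ℝ N p (e₁ p) = lam p • e₁ p)
    (hprin₂ : ∀ p ∈ U, fderiv ℝ N p (e₂ p) = lam p • e₂ p)
    (hprin₃ : ∀ p ∈ U, fderiv ℝ N p (e₃ p) = (-2 * lam p) • e₃ p)
    (hlam0 : ∀ p ∈ U, lam p ≠ 0)
    (htangent : ∀ p ∈ U, ⟪brkt e₁ e₂ p, N p⟫ = 0) :
    ∀ p ∈ U,
      ⟪brkt e₁ e₂ p, e₃ p⟫ = 0 ∧
      fderiv ℝ lam p (e₁ p) = 0 ∧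
      fderiv ℝ lam p (e₂ p) = 0 ∧
      ∃ a b : ℝ, brkt e₁ e₂ p = a • e₁ p + b • e₂ p := by
  intro p hp
  have hUnhds : U ∈ nhds p := hU.mem_nhds hp
  have hNat : ContDiffAt ℝ (⊤ : ℕ∞) N p := hN.contDiffAt hUnhds
  have he₁at : DifferentiableAt ℝ e₁ p :=
    ((he₁.contDiffAt hUnhds).differentiableAt (by simp))
  have he₂at : DifferentiableAt ℝ e₂ p :=
    ((he₂.contDiffAt hUnhds).differentiableAt (by simp))
  have hlamat : DifferentiableAt ℝ lam p :=
    ((hlam.contDiffAt hUnhds).differentiableAt (by simp))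
  have hN'diff : DifferentiableAt ℝ (fderiv ℝ N) p :=
    ((hNat.fderiv_right (m := 1) (WithTop.coe_le_coe.mpr le_top)).differentiableAt one_ne_zero)
  have hsymm : IsSymmSndFDerivAt ℝ N p := hNat.isSymmSndFDerivAt (by rw [minSmoothness_of_isRCLikeNormedField]; exact WithTop.coe_le_coe.mpr (le_top : (2:ℕ∞) ≤ ⊤))
  set d1 := fderiv ℝ lam p (e₁ p) with hd1
  set d2 := fderiv ℝ lam p (e₂ p) with hd2
  -- derivative of q ↦ fderiv N q (e₂ q) at p in direction e₁ p, two ways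
  have hExp₂ : fderiv ℝ (fun q => fderiv ℝ N q (e₂ q)) p (e₁ p)
      = fderiv ℝ N p (fderiv ℝ e₂ p (e₁ p)) + fderiv ℝ (fderiv ℝ N) p (e₁ p) (e₂ p) := by
    rw [fderiv_clm_apply hN'diff he₂at]
    simp
  have hExp₁ : fderiv ℝ (fun q => fderiv ℝ N q (e₁ q)) p (e₂ p)
      = fderiv ℝ N p (fderiv ℝ e₁ p (e₂ p)) + fderiv ℝ (fderiv ℝ N) p (e₂ p) (e₁ p) := by
    rw [fderiv_clm_apply hN'diff he₁at]
    simp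
  have hEq₂ : fderiv ℝ (fun q => fderiv ℝ N q (e₂ q)) p (e₁ p)
      = lam p • fderiv ℝ e₂ p (e₁ p) + d1 • e₂ p := by
    have h1 : (fun q => fderiv ℝ N q (e₂ q)) =ᶠ[nhds p] fun q => lam q • e₂ q :=
      Filter.eventuallyEq_of_mem hUnhds hprin₂
    rw [h1.fderiv_eq, fderiv_fun_smul hlamat he₂at]
    simp [hd1]
  have hEq₁ : fderiv ℝ (fun q => fderiv ℝ N q (e₁ q)) p (e₂ p)
      = lam p • fderiv ℝ e₁ p (e₂ p) + d2 • e₁ p := by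
    have h1 : (fun q => fderiv ℝ N q (e₁ q)) =ᶠ[nhds p] fun q => lam q • e₁ q :=
      Filter.eventuallyEq_of_mem hUnhds hprin₁
    rw [h1.fderiv_eq, fderiv_fun_smul hlamat he₁at]
    simp [hd2]
  have hs := hsymm.eq (e₁ p) (e₂ p)
  have hmain : fderiv ℝ N p (brkt e₁ e₂ p)
      = lam p • brkt e₁ e₂ p + d1 • e₂ p - d2 • e₁ p := by
    have hA : fderiv ℝ N p (fderiv ℝ e₂ p (e₁ p))
        = lam p • fderiv ℝ e₂ p (e₁ p) + d1 • e₂ p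
          - fderiv ℝ (fderiv ℝ N) p (e₁ p) (e₂ p) := by
      rw [← hEq₂, hExp₂]; abel
    have hB : fderiv ℝ N p (fderiv ℝ e₁ p (e₂ p))
        = lam p • fderiv ℝ e₁ p (e₂ p) + d2 • e₁ p
          - fderiv ℝ (fderiv ℝ N) p (e₂ p) (e₁ p) := by
      rw [← hEq₁, hExp₁]; abel
    show fderiv ℝ N p (fderiv ℝ e₂ p (e₁ p) - fderiv ℝ e₁ p (e₂ p)) = _
    rw [map_sub, hA, hB, hs]
    show _ = lam p • (fderiv ℝ e₂ p (e₁ p) - fderiv ℝ e₁ p (e₂ p)) + d1 • e₂ p - d2 • e₁ p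
    rw [smul_sub]; abel
  -- orthonormal basis expansion of the bracket
  have horthp := horth p hp
  have hcard : Fintype.card (Fin 4) = Module.finrank ℝ E4 := by simp
  set B : Module.Basis (Fin 4) ℝ E4 := basisOfOrthonormalOfCardEqFinrank horthp hcard with hB
  have hBcoe : (B : Fin 4 → E4) = ![N p, e₁ p, e₂ p, e₃ p] :=
    coe_basisOfOrthonormalOfCardEqFinrank horthp hcard
  have horthB : Orthonormal ℝ (B : Fin 4 → E4) := by rw [hBcoe]; exact horthp
  set ob : OrthonormalBasis (Fin 4) ℝ E4 := B.toOrthonormalBasis horthB with hob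
  have hobcoe : ∀ i, ob i = (![N p, e₁ p, e₂ p, e₃ p]) i := by
    intro i
    rw [hob, Module.Basis.coe_toOrthonormalBasis, hBcoe]
  set w := brkt e₁ e₂ p with hw
  set c1 := ⟪e₁ p, w⟫ with hc1
  set c2 := ⟪e₂ p, w⟫ with hc2
  set c3 := ⟪e₃ p, w⟫ with hc3
  have hdec : w = c1 • e₁ p + c2 • e₂ p + c3 • e₃ p := by
    have := ob.sum_repr' w
    rw [Fin.sum_univ_four, hobcoe 0, hobcoe 1, hobcoe 2, hobcoe 3] at this
    simp only [Matrix.cons_val_zero, Matrix.cons_val_one, Matrix.head_cons,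
      Matrix.cons_val_two, Matrix.tail_cons, Matrix.cons_val_three, Matrix.head_fin_const] at this
    have h0 : ⟪N p, w⟫ = 0 := by rw [real_inner_comm]; exact htangent p hp
    rw [h0, zero_smul, zero_add] at this
    rw [← this]
  -- inner product facts
  have hinner := orthonormal_iff_ite.mp horthp
  have i11 : ⟪e₁ p, e₁ p⟫ = 1 := by simpa using hinner 1 1
  have i22 : ⟪e₂ p, e₂ p⟫ = 1 := by simpa using hinner 2 2
  have i33 : ⟪e₃ p, e₃ p⟫ = 1 := by simpa using hinner 3 3
  have i12 : ⟪e₁ p, e₂ p⟫ = 0 := by simpa using hinner 1 2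
  have i21 : ⟪e₂ p, e₁ p⟫ = 0 := by simpa using hinner 2 1
  have i13 : ⟪e₁ p, e₃ p⟫ = 0 := by simpa using hinner 1 3
  have i31 : ⟪e₃ p, e₁ p⟫ = 0 := by simpa using hinner 3 1
  have i23 : ⟪e₂ p, e₃ p⟫ = 0 := by simpa using hinner 2 3
  have i32 : ⟪e₃ p, e₂ p⟫ = 0 := by simpa using hinner 3 2
  -- the vector equation
  have heq : c1 • (lam p • e₁ p) + c2 • (lam p • e₂ p) + c3 • ((-2 * lam p) • e₃ p)
      = lam p • (c1 • e₁ p + c2 • e₂ p + c3 • e₃ p) + d1 • e₂ p - d2 • e₁ p := by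
    have : fderiv ℝ N p w = c1 • (lam p • e₁ p) + c2 • (lam p • e₂ p)
        + c3 • ((-2 * lam p) • e₃ p) := by
      conv_lhs => rw [hdec]
      rw [map_add, map_add, map_smul, map_smul, map_smul,
        hprin₁ p hp, hprin₂ p hp, hprin₃ p hp]
    rw [← this, ← hdec, hmain]
  have h1 := congrArg (fun v => ⟪e₁ p, v⟫) heq
  have h2 := congrArg (fun v => ⟪e₂ p, v⟫) heq
  have h3 := congrArg (fun v => ⟪e₃ p, v⟫) heq
  simp only [inner_add_right, inner_sub_right, inner_smul_right,
    i11, i22, i33, i12, i21, i13, i31, i23, i32,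
    mul_zero, mul_one, add_zero, zero_add, mul_zero] at h1 h2 h3
  have hd2 : d2 = 0 := by linarith
  have hd1 : d1 = 0 := by linarith
  have hc3' : c3 = 0 := by
    have hl := hlam0 p hp
    have h3' : lam p * (3 * c3) = 0 := by linarith
    rcases mul_eq_zero.mp h3' with h | h
    · exact absurd h hl
    · linarith
  refine ⟨?_, hd1, hd2, c1, c2, ?_⟩
  · rw [real_inner_comm]; exact hc3'
  · rw [hdec, hc3', zero_smul, add_zero]
end
end
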